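/- arXiv:1709.09032 — 11 statements merged into one kernel-verified Lean document; each statement's English description precedes it below -/
import Mathlib

section
/- Let μ be a nonnegative finite Borel measure on [-1,1], and set u0 = ∫ 1 dμ, u1 = ∫ x dμ, u2p = ∫ x² · 1_{[0,1]}(x) dμ, u2m = ∫ x² · 1_{[-1,0]}(x) dμ. Then u2p - Real.sqrt (u2m * (u0 - u2p)) ≤ u1. -/
/-!
On `[-1, 0]` we have `-x ≤ (x² / t + t) / 2` for every `t > 0`, while on `[0, 1]` we have
`x² - x ≤ 0`. Integrating gives `2 (u2p - u1) ≤ u2m / t + t (u0 - u2p)` for all `t > 0`, and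
optimising over `t` (AM-GM, i.e. Cauchy–Schwarz for `∫_{x<0} |x| dμ`) yields the bound.
-/

open MeasureTheory Set

lemma le_sqrt_mul_of_forall_pos_two_mul_le {a b c : ℝ} (h : ∀ t > 0, 2 * c ≤ a / t + t * b) :
    c ≤ √(a * b) := by
  rcases le_or_gt c 0 with hc | hc
  · exact hc.trans (Real.sqrt_nonneg _)
  rcases le_or_gt b 0 with hb | hb
  · exfalso
    have ht : 0 < (|a| + 1) / c := by positivity
    have hct := h _ ht
    have hsmall : a / ((|a| + 1) / c) < c := by
      rw [div_div_eq_mul_div, div_lt_iff₀ (by positivity)]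
      nlinarith [le_abs_self a]
    nlinarith [mul_nonpos_of_nonneg_of_nonpos ht.le hb]
  · refine Real.le_sqrt_of_sq_le ?_
    have hct := h (c / b) (div_pos hc hb)
    rw [div_div_eq_mul_div, div_mul_cancel₀ _ hb.ne'] at hct
    have hc_le : c ≤ a * b / c := by linarith
    rwa [le_div_iff₀ hc, ← sq] at hc_le

lemma two_mul_sq_indicator_sub_le {x t : ℝ} (hx : x ∈ Icc (-1 : ℝ) 1) (ht : 0 < t) :
    2 * (x ^ 2 * (Icc (0 : ℝ) 1).indicator 1 x - x) ≤
      x ^ 2 * (Icc (-1 : ℝ) 0).indicator 1 x / t +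
        t * (1 - x ^ 2 * (Icc (0 : ℝ) 1).indicator 1 x) := by
  rcases le_or_gt 0 x with hx₀ | hx₀
  · have hnonneg : 0 ≤ x ^ 2 * (Icc (-1 : ℝ) 0).indicator 1 x / t :=
      div_nonneg (mul_nonneg (sq_nonneg x) (indicator_nonneg (fun _ _ ↦ zero_le_one) x)) ht.le
    rw [indicator_of_mem (show x ∈ Icc (0 : ℝ) 1 from ⟨hx₀, hx.2⟩), Pi.one_apply, mul_one]
    have hx₁ : 0 ≤ 1 - x := by linarith [hx.2]
    have hx₂ : 0 ≤ 1 + x := by linarith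
    nlinarith [mul_nonneg hx₀ hx₁, mul_nonneg ht.le (mul_nonneg hx₁ hx₂)]
  · rw [indicator_of_notMem (fun h ↦ hx₀.not_ge h.1),
      indicator_of_mem (show x ∈ Icc (-1 : ℝ) 0 from ⟨hx.1, hx₀.le⟩), Pi.one_apply,
      mul_one, mul_zero, sub_zero, mul_one, div_add' _ _ _ ht.ne', le_div_iff₀ ht]
    nlinarith [sq_nonneg (x + t)]

lemma integrable_sq_mul_indicator {μ : Measure ℝ} [IsFiniteMeasure μ] {s : Set ℝ}
    (hs : MeasurableSet s) (hs₁ : s ⊆ Icc (-1) 1) :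
    Integrable (fun x ↦ x ^ 2 * s.indicator 1 x) μ := by
  refine Integrable.of_bound (by fun_prop (disch := exact hs)) 1 (ae_of_all _ fun x ↦ ?_)
  by_cases hx : x ∈ s
  · have hx₁ := hs₁ hx
    rw [indicator_of_mem hx, Pi.one_apply, mul_one, Real.norm_of_nonneg (sq_nonneg x)]
    nlinarith [hx₁.1, hx₁.2]
  · simp [indicator_of_notMem hx]

lemma integrable_id_of_ae_mem_Icc {μ : Measure ℝ} [IsFiniteMeasure μ]
    (hμ : ∀ᵐ x ∂μ, x ∈ Icc (-1 : ℝ) 1) : Integrable (fun x ↦ x) μ :=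
  Integrable.of_bound measurable_id.aestronglyMeasurable 1 <| by
    filter_upwards [hμ] with x hx using abs_le.2 hx

lemma two_mul_sub_integral_le_of_ae_mem_Icc {μ : Measure ℝ} [IsFiniteMeasure μ]
    (hμ : ∀ᵐ x ∂μ, x ∈ Icc (-1 : ℝ) 1) {t : ℝ} (ht : 0 < t) :
    2 * ((∫ x, x ^ 2 * (Icc (0 : ℝ) 1).indicator 1 x ∂μ) - ∫ x, x ∂μ) ≤
      (∫ x, x ^ 2 * (Icc (-1 : ℝ) 0).indicator 1 x ∂μ) / t +
        t * ((∫ _, (1 : ℝ) ∂μ) - ∫ x, x ^ 2 * (Icc (0 : ℝ) 1).indicator 1 x ∂μ) := by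
  have hpos : Integrable (fun x ↦ x ^ 2 * (Icc (0 : ℝ) 1).indicator 1 x) μ :=
    integrable_sq_mul_indicator measurableSet_Icc (Icc_subset_Icc_left (by norm_num))
  have hneg : Integrable (fun x ↦ x ^ 2 * (Icc (-1 : ℝ) 0).indicator 1 x) μ :=
    integrable_sq_mul_indicator measurableSet_Icc (Icc_subset_Icc_right (by norm_num))
  have hid := integrable_id_of_ae_mem_Icc hμ
  have hrest : Integrable (fun x ↦ t * (1 - x ^ 2 * (Icc (0 : ℝ) 1).indicator 1 x)) μ :=
    ((integrable_const 1).sub hpos).const_mul t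
  calc 2 * ((∫ x, x ^ 2 * (Icc (0 : ℝ) 1).indicator 1 x ∂μ) - ∫ x, x ∂μ)
      = ∫ x, 2 * (x ^ 2 * (Icc (0 : ℝ) 1).indicator 1 x - x) ∂μ := by
        rw [integral_const_mul, integral_sub hpos hid]
    _ ≤ ∫ x, (x ^ 2 * (Icc (-1 : ℝ) 0).indicator 1 x / t +
          t * (1 - x ^ 2 * (Icc (0 : ℝ) 1).indicator 1 x)) ∂μ :=
        integral_mono_ae ((hpos.sub hid).const_mul 2) ((hneg.div_const t).add hrest)
          (by filter_upwards [hμ] with x hx using two_mul_sq_indicator_sub_le hx ht)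
    _ = _ := by
        rw [integral_add (hneg.div_const t) hrest, integral_div, integral_const_mul,
          integral_sub (integrable_const 1) hpos]

theorem dmm2_lower_bound (μ : Measure ℝ) [IsFiniteMeasure μ]
    (hsupp : μ (Icc (-1 : ℝ) 1)ᶜ = 0)
    (u0 u1 u2p u2m : ℝ)
    (hu0 : u0 = ∫ x, (1 : ℝ) ∂μ)
    (hu1 : u1 = ∫ x, x ∂μ)
    (hu2p : u2p = ∫ x, x ^ 2 * (Icc (0 : ℝ) 1).indicator 1 x ∂μ)
    (hu2m : u2m = ∫ x, x ^ 2 * (Icc (-1 : ℝ) 0).indicator 1 x ∂μ) :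
    u2p - Real.sqrt (u2m * (u0 - u2p)) ≤ u1 := by
  subst hu0 hu1 hu2p hu2m
  rw [sub_le_comm]
  exact le_sqrt_mul_of_forall_pos_two_mul_le fun t ht ↦
    two_mul_sub_integral_le_of_ae_mem_Icc (ae_iff.2 hsupp) ht
end

section
/- Let μ be a nonnegative finite Borel measure on [-1,1], and set u0 = ∫ 1 dμ, u1 = ∫ x dμ, u2p = ∫ x² · 1_{[0,1]}(x) dμ, u2m = ∫ x² · 1_{[-1,0]}(x) dμ. Then u1 ≤ Real.sqrt (u2p * (u0 - u2m)) - u2m. -/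
open MeasureTheory Set

/-! On `[-1, 0]` we have `x ≤ -x²`, so that half of `u1` is at most `-u2m`. On `(0, 1]`,
Cauchy–Schwarz bounds `∫ x` by `√(μ (0, 1] · ∫_{(0, 1]} x²)`, and `μ (0, 1] ≤ u0 - u2m` because
`x² ≤ 1` gives `u2m ≤ μ [-1, 0]`. The half-open `(0, 1]` keeps an atom at `0` from being
counted in both masses. -/

section

variable {α : Type*} [MeasurableSpace α] {μ : Measure α}

theorem integral_mul_indicator_one {f : α → ℝ} {s : Set α} (hs : MeasurableSet s) :
    ∫ x, f x * s.indicator 1 x ∂μ = ∫ x in s, f x ∂μ := by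
  simp_rw [← indicator_mul_right s f 1, Pi.one_apply, mul_one]
  exact integral_indicator hs

theorem sq_integral_le_measureReal_mul_integral_sq [IsFiniteMeasure μ] {f : α → ℝ}
    (hf : MemLp f 2 μ) : (∫ x, f x ∂μ) ^ 2 ≤ μ.real univ * ∫ x, f x ^ 2 ∂μ := by
  set m := μ.real univ
  set S := ∫ x, f x ∂μ
  set Q := ∫ x, f x ^ 2 ∂μ
  rcases measureReal_nonneg.eq_or_lt with hm | hm
  · have hμ : μ = 0 := Measure.measure_univ_eq_zero.mp ((measureReal_eq_zero_iff).mp hm.symm)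
    simp [S, m, hμ]
  have hf1 : Integrable f μ := hf.integrable one_le_two
  -- `S / m` is the mean of `f`; scaling by `m` avoids dividing by it.
  have hexpand : ∫ x, (m * f x - S) ^ 2 ∂μ = m * (m * Q - S ^ 2) := by
    have hpoint : (fun x => (m * f x - S) ^ 2)
        = fun x => m ^ 2 * f x ^ 2 - 2 * m * S * f x + S ^ 2 := by
      funext x; ring
    rw [hpoint, integral_add (f := fun x => m ^ 2 * f x ^ 2 - 2 * m * S * f x)
      ((hf.integrable_sq.const_mul _).sub (hf1.const_mul _)) (integrable_const _),
      integral_sub (hf.integrable_sq.const_mul _) (hf1.const_mul _), integral_const_mul,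
      integral_const_mul, integral_const, smul_eq_mul]
    ring
  have hnonneg : 0 ≤ m * (m * Q - S ^ 2) := hexpand ▸ integral_nonneg fun x => sq_nonneg _
  nlinarith

theorem setIntegral_le_sqrt_measureReal_mul_setIntegral_sq [IsFiniteMeasure μ] {f : α → ℝ}
    {s : Set α} (hf : MemLp f 2 (μ.restrict s)) :
    ∫ x in s, f x ∂μ ≤ √(μ.real s * ∫ x in s, f x ^ 2 ∂μ) := by
  have h := sq_integral_le_measureReal_mul_integral_sq hf
  rw [measureReal_restrict_apply_univ] at h
  exact (le_abs_self _).trans (Real.abs_le_sqrt h)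

end

section

variable {μ : Measure ℝ}

theorem integral_eq_setIntegral_Icc_add_setIntegral_Ioc {f : ℝ → ℝ} {a b c : ℝ}
    (hμ : ∀ᵐ x ∂μ, x ∈ Icc a c) (hab : a ≤ b) (hbc : b ≤ c) (hf : IntegrableOn f (Icc a c) μ) :
    ∫ x, f x ∂μ = ∫ x in Icc a b, f x ∂μ + ∫ x in Ioc b c, f x ∂μ := by
  have hdisj : Disjoint (Icc a b) (Ioc b c) :=
    disjoint_left.mpr fun x hx hx' => hx'.1.not_ge hx.2
  rw [← setIntegral_union hdisj measurableSet_Ioc (hf.mono_set (Icc_subset_Icc_right hbc))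
    (hf.mono_set (Ioc_subset_Icc_self.trans (Icc_subset_Icc_left hab))),
    Icc_union_Ioc_eq_Icc hab hbc, Measure.restrict_eq_self_of_ae_mem hμ]

theorem setIntegral_Icc_neg_one_zero_le_neg_setIntegral_sq [IsLocallyFiniteMeasure μ] :
    ∫ x in Icc (-1 : ℝ) 0, x ∂μ ≤ -∫ x in Icc (-1 : ℝ) 0, x ^ 2 ∂μ := by
  rw [← integral_neg]
  refine setIntegral_mono_on continuous_id.integrableOn_Icc
    (continuous_id.pow 2).neg.integrableOn_Icc measurableSet_Icc fun x hx => ?_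
  nlinarith [hx.1, hx.2]

theorem measureReal_Ioc_zero_one_le_sub_setIntegral_sq [IsFiniteMeasure μ] :
    μ.real (Ioc (0 : ℝ) 1) ≤ μ.real univ - ∫ x in Icc (-1 : ℝ) 0, x ^ 2 ∂μ := by
  have hsq : ∫ x in Icc (-1 : ℝ) 0, x ^ 2 ∂μ ≤ μ.real (Icc (-1 : ℝ) 0) := by
    calc ∫ x in Icc (-1 : ℝ) 0, x ^ 2 ∂μ ≤ ∫ x in Icc (-1 : ℝ) 0, (1 : ℝ) ∂μ :=
          setIntegral_mono_on (continuous_id.pow 2).integrableOn_Icc integrableOn_const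
            measurableSet_Icc fun x hx => by nlinarith [hx.1, hx.2]
      _ = μ.real (Icc (-1 : ℝ) 0) := by simp
  have hdisj : Disjoint (Icc (-1 : ℝ) 0) (Ioc 0 1) :=
    disjoint_left.mpr fun x hx hx' => hx'.1.not_ge hx.2
  have hmass : μ.real (Icc (-1 : ℝ) 0) + μ.real (Ioc 0 1) ≤ μ.real univ := by
    rw [← measureReal_union hdisj measurableSet_Ioc]
    exact measureReal_mono (subset_univ _)
  linarith

theorem memLp_id_restrict_Ioc_zero_one [IsFiniteMeasure μ] (p : ENNReal) :
    MemLp (fun x : ℝ => x) p (μ.restrict (Ioc 0 1)) :=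
  MemLp.of_bound measurable_id.aestronglyMeasurable 1 <|
    ae_restrict_of_forall_mem measurableSet_Ioc fun x hx => by
      rw [Real.norm_eq_abs, abs_le]
      exact ⟨by linarith [hx.1], hx.2⟩

end

theorem dmm2_upper_bound (μ : Measure ℝ) [IsFiniteMeasure μ]
    (hsupp : μ (Icc (-1 : ℝ) 1)ᶜ = 0)
    (u0 u1 u2p u2m : ℝ)
    (hu0 : u0 = ∫ x, (1 : ℝ) ∂μ)
    (hu1 : u1 = ∫ x, x ∂μ)
    (hu2p : u2p = ∫ x, x ^ 2 * (Icc (0 : ℝ) 1).indicator 1 x ∂μ)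
    (hu2m : u2m = ∫ x, x ^ 2 * (Icc (-1 : ℝ) 0).indicator 1 x ∂μ) :
    u1 ≤ Real.sqrt (u2p * (u0 - u2m)) - u2m := by
  rw [integral_mul_indicator_one measurableSet_Icc] at hu2p hu2m
  have hsplit : u1 = ∫ x in Icc (-1 : ℝ) 0, x ∂μ + ∫ x in Ioc (0 : ℝ) 1, x ∂μ :=
    hu1 ▸ integral_eq_setIntegral_Icc_add_setIntegral_Ioc (ae_iff.mpr hsupp) (by norm_num)
      zero_le_one continuous_id.integrableOn_Icc
  have hneg := hu2m ▸ setIntegral_Icc_neg_one_zero_le_neg_setIntegral_sq (μ := μ)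
  have hpos := setIntegral_le_sqrt_measureReal_mul_setIntegral_sq
    (memLp_id_restrict_Ioc_zero_one (μ := μ) 2)
  have hmass : μ.real (Ioc (0 : ℝ) 1) ≤ u0 - u2m := by
    simpa [hu0, hu2m] using measureReal_Ioc_zero_one_le_sub_setIntegral_sq (μ := μ)
  have hsq : ∫ x in Ioc (0 : ℝ) 1, x ^ 2 ∂μ ≤ u2p :=
    hu2p ▸ setIntegral_mono_set (continuous_id.pow 2).integrableOn_Icc
      (ae_of_all _ fun x => sq_nonneg x) Ioc_subset_Icc_self.eventuallyLE
  have hsqrt : √(μ.real (Ioc (0 : ℝ) 1) * ∫ x in Ioc (0 : ℝ) 1, x ^ 2 ∂μ)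
      ≤ √(u2p * (u0 - u2m)) := by
    rw [mul_comm]
    exact Real.sqrt_le_sqrt (mul_le_mul hsq hmass measureReal_nonneg
      ((setIntegral_nonneg measurableSet_Ioc fun x _ => sq_nonneg x).trans hsq))
  linarith
end

section
/- Let η1, η2p, η2m ∈ ℝ with η2p > 0, η2m > 0 and η1² ≤ η2p + η2m. Define η1p = η2p * (η1 + η2m * Real.sqrt ((η2p + η2m - η1²) / (η2m * η2p))) / (η2m + η2p) and η1m = η2m * (η1 - η2p * Real.sqrt ((η2p + η2m - η1²) / (η2m * η2p))) / (η2m + η2p). Then η1p² / η2p + η1m² / η2m = 1. -/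
/-! The cross terms `± 2 η2p η2m η1 s` of the two squares cancel, so with
`s = √((η2p + η2m - η1²) / (η2m η2p))` the sum collapses to `(η1² + η2p η2m s²) / (η2p + η2m)`,
and `η2p η2m s² = η2p + η2m - η1²` by the choice of `s`. -/

lemma two_atom_sq_div_add_sq_div {a b x s : ℝ} (hab : b + a ≠ 0) :
    (a * (x + b * s) / (b + a)) ^ 2 / a + (b * (x - a * s) / (b + a)) ^ 2 / b
      = (x ^ 2 + a * b * s ^ 2) / (b + a) := by
  field_simp
  ring

lemma mul_sq_sqrt_div_mul {a b c : ℝ} (ha : 0 < a) (hb : 0 < b) (hc : 0 ≤ c) :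
    a * b * Real.sqrt (c / (b * a)) ^ 2 = c := by
  rw [Real.sq_sqrt (by positivity)]
  field_simp

theorem dmm2_half_moments_quadratic
    (η1 η2p η2m : ℝ) (h2p : 0 < η2p) (h2m : 0 < η2m)
    (hη1 : η1 ^ 2 ≤ η2p + η2m)
    (η1p η1m : ℝ)
    (hη1p : η1p = η2p * (η1 + η2m * Real.sqrt ((η2p + η2m - η1 ^ 2) / (η2m * η2p))) / (η2m + η2p))
    (hη1m : η1m = η2m * (η1 - η2p * Real.sqrt ((η2p + η2m - η1 ^ 2) / (η2m * η2p))) / (η2m + η2p)) :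
    η1p ^ 2 / η2p + η1m ^ 2 / η2m = 1 := by
  subst hη1p hη1m
  rw [two_atom_sq_div_add_sq_div (by positivity),
    mul_sq_sqrt_div_mul h2p h2m (sub_nonneg.mpr hη1)]
  field_simp
  ring
end

section
/- Let η1, η2p, η2m ∈ ℝ with 0 < η2p ≤ 1, 0 < η2m ≤ 1, η2p + η2m ≤ 1, and η2p - Real.sqrt (η2m * (1 - η2p)) ≤ η1 ≤ Real.sqrt (η2p * (1 - η2m)) - η2m. Define η1p = η2p * (η1 + η2m * Real.sqrt ((η2p + η2m - η1²) / (η2m * η2p))) / (η2m + η2p) and η1m = η2m * (η1 - η2p * Real.sqrt ((η2p + η2m - η1²) / (η2m * η2p))) / (η2m + η2p). Then η1p ≥ η2p and -η1m ≥ η2m (the standard half-moment realizability conditions of second order for the split moments). -/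
/-!
Write `s = √((η2p + η2m - η1²) / (η2m η2p))`. The two claims are `η2m s ≥ η2p + η2m - η1` and
`η2p s ≥ η2p + η2m + η1`, which are exchanged by swapping `η2p ↔ η2m` and `η1 ↔ -η1`, as are the
lower and upper realizability bounds on `η1`. Each follows by squaring from the identity
`η2m (η2p + η2m - η1²) - η2p (η2p + η2m - η1)² = (η2p + η2m) (η2m (1 - η2p) - (η1 - η2p)²)`,
whose right-hand side is nonnegative by the corresponding realizability bound.
-/

open Real

theorem sq_sub_le_of_realizable_lower {p m x : ℝ} (hm : 0 < m) (hsum : p + m ≤ 1)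
    (hlow : p - √(m * (1 - p)) ≤ x) (hx : x < p + m) :
    (x - p) ^ 2 ≤ m * (1 - p) := by
  have hm_le : m ≤ √(m * (1 - p)) :=
    Real.le_sqrt_of_sq_le (by nlinarith)
  calc (x - p) ^ 2 ≤ √(m * (1 - p)) ^ 2 := sq_le_sq' (by linarith) (by linarith)
    _ = m * (1 - p) := Real.sq_sqrt (by nlinarith)

theorem add_sub_le_mul_sqrt_of_realizable_lower {p m x : ℝ} (hp : 0 < p) (hm : 0 < m)
    (hsum : p + m ≤ 1) (hlow : p - √(m * (1 - p)) ≤ x) :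
    p + m - x ≤ m * √((p + m - x ^ 2) / (m * p)) := by
  rcases le_or_gt (p + m - x) 0 with hx | hx
  · exact hx.trans (by positivity)
  have hsq := sq_sub_le_of_realizable_lower hm hsum hlow (by linarith)
  have hkey : p * (p + m - x) ^ 2 ≤ m * (p + m - x ^ 2) := by
    nlinarith [mul_le_mul_of_nonneg_left hsq (by linarith : (0 : ℝ) ≤ p + m)]
  have hq : 0 ≤ (p + m - x ^ 2) / (m * p) := by
    apply div_nonneg _ (by positivity)
    nlinarith [sq_nonneg (p + m - x)]
  apply le_of_sq_le_sq _ (by positivity)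
  rw [mul_pow, Real.sq_sqrt hq, mul_div_assoc', le_div_iff₀ (by positivity)]
  nlinarith [mul_le_mul_of_nonneg_left hkey hm.le]

theorem dmm2_half_moment_realizability_general
    (η1 η2p η2m : ℝ) (h2p : 0 < η2p) (h2m : 0 < η2m)
    (hsum : η2p + η2m ≤ 1)
    (hlow : η2p - Real.sqrt (η2m * (1 - η2p)) ≤ η1)
    (hup : η1 ≤ Real.sqrt (η2p * (1 - η2m)) - η2m)
    (η1p η1m : ℝ)
    (hη1p : η1p = η2p * (η1 + η2m * Real.sqrt ((η2p + η2m - η1 ^ 2) / (η2m * η2p))) / (η2m + η2p))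
    (hη1m : η1m = η2m * (η1 - η2p * Real.sqrt ((η2p + η2m - η1 ^ 2) / (η2m * η2p))) / (η2m + η2p)) :
    η1p ≥ η2p ∧ -η1m ≥ η2m := by
  set s := √((η2p + η2m - η1 ^ 2) / (η2m * η2p))
  have hplus : η2p + η2m - η1 ≤ η2m * s :=
    add_sub_le_mul_sqrt_of_realizable_lower h2p h2m hsum hlow
  have hminus : η2p + η2m + η1 ≤ η2p * s := by
    have := add_sub_le_mul_sqrt_of_realizable_lower (x := -η1) h2m h2p (by linarith) (by linarith)
    rwa [sub_neg_eq_add, neg_sq, add_comm η2m η2p, mul_comm η2p η2m] at this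
  have hmp : 0 < η2m + η2p := by linarith
  subst hη1p hη1m
  constructor
  · rw [ge_iff_le, le_div_iff₀ hmp]
    nlinarith [mul_le_mul_of_nonneg_left hplus h2p.le]
  · rw [ge_iff_le, ← neg_div, le_div_iff₀ hmp]
    nlinarith [mul_le_mul_of_nonneg_left hminus h2m.le]

theorem dmm2_half_moment_realizability
    (η1 η2p η2m : ℝ) (h2p : 0 < η2p) (h2p1 : η2p ≤ 1) (h2m : 0 < η2m) (h2m1 : η2m ≤ 1)
    (hsum : η2p + η2m ≤ 1)
    (hlow : η2p - Real.sqrt (η2m * (1 - η2p)) ≤ η1)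
    (hup : η1 ≤ Real.sqrt (η2p * (1 - η2m)) - η2m)
    (η1p η1m : ℝ)
    (hη1p : η1p = η2p * (η1 + η2m * Real.sqrt ((η2p + η2m - η1 ^ 2) / (η2m * η2p))) / (η2m + η2p))
    (hη1m : η1m = η2m * (η1 - η2p * Real.sqrt ((η2p + η2m - η1 ^ 2) / (η2m * η2p))) / (η2m + η2p)) :
    η1p ≥ η2p ∧ -η1m ≥ η2m :=
  dmm2_half_moment_realizability_general η1 η2p η2m h2p h2m hsum hlow hup η1p η1m hη1p hη1m
end

section
/- Let η2p, η2m ∈ [0,1] with η2p + η2m ≤ 1. Then η2p - Real.sqrt (η2m * (1 - η2p)) = Real.sqrt (η2p * (1 - η2m)) - η2m holds if and only if η2p = 1 - η2m, or η2p = 0 and η2m = 0. -/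
theorem dmm2_bounds_coincide_iff
    (η2p η2m : ℝ) (h2p : η2p ∈ Set.Icc (0 : ℝ) 1) (h2m : η2m ∈ Set.Icc (0 : ℝ) 1)
    (hsum : η2p + η2m ≤ 1) :
    η2p - Real.sqrt (η2m * (1 - η2p)) = Real.sqrt (η2p * (1 - η2m)) - η2m ↔
      η2p = 1 - η2m ∨ (η2p = 0 ∧ η2m = 0) := by
  obtain ⟨hp0, hp1⟩ := h2p
  obtain ⟨hm0, hm1⟩ := h2m
  have ha : η2p ≤ Real.sqrt (η2p * (1 - η2m)) := by
    have := Real.sqrt_le_sqrt (show η2p ^ 2 ≤ η2p * (1 - η2m) by nlinarith)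
    rwa [Real.sqrt_sq hp0] at this
  have hb : η2m ≤ Real.sqrt (η2m * (1 - η2p)) := by
    have := Real.sqrt_le_sqrt (show η2m ^ 2 ≤ η2m * (1 - η2p) by nlinarith)
    rwa [Real.sqrt_sq hm0] at this
  constructor
  · intro h
    have h1 : Real.sqrt (η2p * (1 - η2m)) = η2p := by linarith
    have h2 : Real.sqrt (η2m * (1 - η2p)) = η2m := by linarith
    have e1 : η2p * (1 - η2m) = η2p ^ 2 := by
      have := Real.sq_sqrt (show (0:ℝ) ≤ η2p * (1 - η2m) by nlinarith)
      rw [h1] at this; linarith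
    have e2 : η2m * (1 - η2p) = η2m ^ 2 := by
      have := Real.sq_sqrt (show (0:ℝ) ≤ η2m * (1 - η2p) by nlinarith)
      rw [h2] at this; linarith
    by_cases hc : η2p + η2m = 1
    · left; linarith
    · right
      have hp : η2p = 0 := by
        rcases mul_eq_zero.mp (show η2p * (1 - η2m - η2p) = 0 by nlinarith) with h' | h'
        · exact h'
        · exact absurd (by linarith) hc
      have hm : η2m = 0 := by
        rcases mul_eq_zero.mp (show η2m * (1 - η2p - η2m) = 0 by nlinarith) with h' | h'
        · exact h'
        · exact absurd (by linarith) hc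
      exact ⟨hp, hm⟩
  · rintro (h | ⟨h1, h2⟩)
    · have hp' : Real.sqrt (η2p * (1 - η2m)) = η2p := by
        rw [h, Real.sqrt_mul_self (by linarith)]
      have hm' : Real.sqrt (η2m * (1 - η2p)) = η2m := by
        rw [h, show (1 - (1 - η2m)) = η2m by ring, Real.sqrt_mul_self hm0]
      rw [hp', hm']
    · rw [h1, h2]; simp
end

section
/- Let u0, u1, u2p, u2m ∈ ℝ with u0 ≥ 0, 0 ≤ u2p ≤ u0, 0 ≤ u2m ≤ u0, and u2p - Real.sqrt (u2m * (u0 - u2p)) ≤ u1 ≤ Real.sqrt (u2p * (u0 - u2m)) - u2m. Then the standard second-order full-moment realizability condition holds: u0 * (u2p + u2m) ≥ u1². -/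
theorem dmm2_implies_full_moment_realizability
    (u0 u1 u2p u2m : ℝ) (hu0 : 0 ≤ u0)
    (h2p : 0 ≤ u2p) (h2p0 : u2p ≤ u0) (h2m : 0 ≤ u2m) (h2m0 : u2m ≤ u0)
    (hlow : u2p - Real.sqrt (u2m * (u0 - u2p)) ≤ u1)
    (hup : u1 ≤ Real.sqrt (u2p * (u0 - u2m)) - u2m) :
    u0 * (u2p + u2m) ≥ u1 ^ 2 := by
  rcases le_or_gt 0 u1 with h | h
  · have h1 : u1 ≤ Real.sqrt (u2p * (u0 - u2m)) := by linarith
    have h2 : u1 ^ 2 ≤ Real.sqrt (u2p * (u0 - u2m)) ^ 2 := by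
      exact pow_le_pow_left₀ h h1 2
    rw [Real.sq_sqrt (by nlinarith : (0:ℝ) ≤ u2p * (u0 - u2m))] at h2
    nlinarith
  · have h1 : -u1 ≤ Real.sqrt (u2m * (u0 - u2p)) := by linarith
    have h2 : (-u1) ^ 2 ≤ Real.sqrt (u2m * (u0 - u2p)) ^ 2 := by
      exact pow_le_pow_left₀ (by linarith) h1 2
    rw [Real.sq_sqrt (by nlinarith : (0:ℝ) ≤ u2m * (u0 - u2p))] at h2
    nlinarith
end

section
/- Let ψ : ℝ → ℝ be twice continuously differentiable on a neighborhood of [-1,1], and let l ∈ ℕ with l ≥ 2. Then ∫_{0}^{1} x^l * (deriv (fun y ↦ (1 - y²) * deriv ψ y)) x dx = -(l*(l+1)) * ∫_{0}^{1} x^l * ψ x dx + (l*(l-1)) * ∫_{0}^{1} x^(l-2) * ψ x dx. -/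
open Set intervalIntegral
open scoped Interval

/-! Integrate by parts against `x ^ l`: the boundary terms vanish because `1 - y ^ 2` vanishes
at `1` and `x ^ l` at `0`. Splitting `x ^ (l - 1) * (1 - x ^ 2) = x ^ (l - 1) - x ^ (l + 1)` and
integrating by parts once more against each monomial, the two boundary terms `ψ 1` cancel and
those at `0` vanish since `l ≥ 2`. -/

theorem ContDiffOn.hasDerivAt_deriv_of_isOpen {f : ℝ → ℝ} {U : Set ℝ} (hf : ContDiffOn ℝ 1 f U)
    (hU : IsOpen U) {x : ℝ} (hx : x ∈ U) : HasDerivAt f (deriv f x) x :=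
  ((hf.differentiableOn one_ne_zero x hx).differentiableAt (hU.mem_nhds hx)).hasDerivAt

theorem integral_pow_mul_deriv {f : ℝ → ℝ} {U : Set ℝ} {a b : ℝ} (hU : IsOpen U)
    (hab : [[a, b]] ⊆ U) (hf : ContDiffOn ℝ 1 f U) (n : ℕ) :
    ∫ x in a..b, x ^ n * deriv f x =
      b ^ n * f b - a ^ n * f a - n * ∫ x in a..b, x ^ (n - 1) * f x := by
  have hf' : ContinuousOn (deriv f) [[a, b]] :=
    (hf.continuousOn_deriv_of_isOpen hU le_rfl).mono hab
  rw [integral_mul_deriv_eq_deriv_mul (fun x _ => hasDerivAt_pow n x)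
    (fun x hx => hf.hasDerivAt_deriv_of_isOpen hU (hab hx))
    ((by fun_prop : Continuous fun x : ℝ => (n : ℝ) * x ^ (n - 1)).intervalIntegrable _ _)
    hf'.intervalIntegrable, ← integral_const_mul]
  simp only [mul_assoc]

theorem integral_pow_mul_one_sub_sq_mul {h : ℝ → ℝ} {a b : ℝ} (hh : ContinuousOn h [[a, b]])
    (n : ℕ) :
    ∫ x in a..b, x ^ n * ((1 - x ^ 2) * h x) =
      (∫ x in a..b, x ^ n * h x) - ∫ x in a..b, x ^ (n + 2) * h x := by
  have hint (k : ℕ) : IntervalIntegrable (fun x => x ^ k * h x) MeasureTheory.volume a b :=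
    ((continuous_pow k).continuousOn.mul hh).intervalIntegrable
  rw [← integral_sub (hint n) (hint (n + 2))]
  congr 1 with x
  ring

theorem laplace_beltrami_positive_half_moment
    (ψ : ℝ → ℝ) (U : Set ℝ) (hU : IsOpen U) (hsub : Set.Icc (-1 : ℝ) 1 ⊆ U)
    (hψ : ContDiffOn ℝ 2 ψ U) (l : ℕ) (hl : 2 ≤ l) :
    ∫ x in (0 : ℝ)..1, x ^ l * deriv (fun y => (1 - y ^ 2) * deriv ψ y) x =
      -((l : ℝ) * (l + 1)) * (∫ x in (0 : ℝ)..1, x ^ l * ψ x)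
      + (l : ℝ) * ((l : ℝ) - 1) * ∫ x in (0 : ℝ)..1, x ^ (l - 2) * ψ x := by
  obtain ⟨m, rfl⟩ := Nat.exists_eq_add_of_le' hl
  have h01 : [[(0 : ℝ), 1]] ⊆ U := by
    rw [uIcc_of_le zero_le_one]
    exact (Icc_subset_Icc_left (by norm_num)).trans hsub
  have hψ' : ContDiffOn ℝ 1 (deriv ψ) U := hψ.deriv_of_isOpen hU (by norm_num)
  have hflux : ContDiffOn ℝ 1 (fun y => (1 - y ^ 2) * deriv ψ y) U := by fun_prop
  rw [integral_pow_mul_deriv hU h01 hflux, Nat.add_sub_cancel,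
    integral_pow_mul_one_sub_sq_mul (hψ'.continuousOn.mono h01),
    integral_pow_mul_deriv hU h01 (hψ.of_le one_le_two),
    integral_pow_mul_deriv hU h01 (hψ.of_le one_le_two)]
  push_cast
  ring
end

section
/- Let ψ : ℝ → ℝ be twice continuously differentiable on a neighborhood of [-1,1], and let l ∈ ℕ with l ≥ 2. Then ∫_{-1}^{0} x^l * (deriv (fun y ↦ (1 - y²) * deriv ψ y)) x dx = -(l*(l+1)) * ∫_{-1}^{0} x^l * ψ x dx + (l*(l-1)) * ∫_{-1}^{0} x^(l-2) * ψ x dx. -/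
/-! Δ = d/dμ((1 - μ²) d/dμ) is a Sturm–Liouville operator, so Green's formula moves it from ψ onto
the monomial μ^l at the cost of the boundary term `(1 - μ²)(μ^l ψ' - l μ^(l-1) ψ)` at `-1` and `0`.
That term vanishes at `-1` because of the weight `1 - μ²` and at `0` because `l ≥ 2`, and
`Δ(μ^l) = l(l-1) μ^(l-2) - l(l+1) μ^l`. -/

open intervalIntegral Set MeasureTheory

theorem integral_mul_deriv_flux_eq_integral_deriv_flux_mul_add {a b : ℝ}
    {p u v u' v' F G : ℝ → ℝ}
    (hu : ∀ x ∈ uIcc a b, HasDerivAt u (u' x) x)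
    (hv : ∀ x ∈ uIcc a b, HasDerivAt v (v' x) x)
    (hF : ∀ x ∈ uIcc a b, HasDerivAt (fun y => p y * u' y) (F x) x)
    (hG : ∀ x ∈ uIcc a b, HasDerivAt (fun y => p y * v' y) (G x) x)
    (huG : IntervalIntegrable (fun x => u x * G x) volume a b)
    (hFv : IntervalIntegrable (fun x => F x * v x) volume a b) :
    ∫ x in a..b, u x * G x =
      (∫ x in a..b, F x * v x)
        + (p b * (u b * v' b - u' b * v b) - p a * (u a * v' a - u' a * v a)) := by
  have hW : ∀ x ∈ uIcc a b, HasDerivAt (fun y => u y * (p y * v' y) - p y * u' y * v y)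
      (u x * G x - F x * v x) x := by
    intro x hx
    exact (((hu x hx).mul (hG x hx)).sub ((hF x hx).mul (hv x hx))).congr_deriv (by ring)
  have hFTC := integral_eq_sub_of_hasDerivAt hW (huG.sub hFv)
  rw [integral_sub huG hFv] at hFTC
  linear_combination hFTC

theorem ContDiffOn.hasDerivAt_deriv {𝕜 F : Type*} [NontriviallyNormedField 𝕜]
    [NormedAddCommGroup F] [NormedSpace 𝕜 F] {f : 𝕜 → F} {U : Set 𝕜} {n : WithTop ℕ∞} {x : 𝕜}
    (hf : ContDiffOn 𝕜 n f U) (hU : IsOpen U) (hn : n ≠ 0) (hx : x ∈ U) :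
    HasDerivAt f (deriv f x) x :=
  ((hf.differentiableOn hn).differentiableAt (hU.mem_nhds hx)).hasDerivAt

theorem hasDerivAt_one_sub_sq_mul_deriv_pow (l : ℕ) (x : ℝ) :
    HasDerivAt (fun y : ℝ => (1 - y ^ 2) * (l * y ^ (l - 1)))
      ((l : ℝ) * (l - 1) * x ^ (l - 2) - l * (l + 1) * x ^ l) x := by
  rcases l with _ | _ | k
  · simpa using hasDerivAt_const x (0 : ℝ)
  · norm_num
    exact ((hasDerivAt_pow 2 x).const_sub 1).congr_deriv (by ring)
  · refine (((hasDerivAt_pow 2 x).const_sub 1).mul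
      ((hasDerivAt_pow (k + 1) x).const_mul ((k + 2 : ℕ) : ℝ))).congr_deriv ?_
    push_cast [Nat.add_sub_cancel]
    ring

theorem laplace_beltrami_negative_half_moment
    (ψ : ℝ → ℝ) (U : Set ℝ) (hU : IsOpen U) (hsub : Set.Icc (-1 : ℝ) 1 ⊆ U)
    (hψ : ContDiffOn ℝ 2 ψ U) (l : ℕ) (hl : 2 ≤ l) :
    ∫ x in (-1 : ℝ)..0, x ^ l * deriv (fun y => (1 - y ^ 2) * deriv ψ y) x =
      -((l : ℝ) * (l + 1)) * (∫ x in (-1 : ℝ)..0, x ^ l * ψ x)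
      + (l : ℝ) * ((l : ℝ) - 1) * ∫ x in (-1 : ℝ)..0, x ^ (l - 2) * ψ x := by
  set φ : ℝ → ℝ := fun y => (1 - y ^ 2) * deriv ψ y
  have hIcc : uIcc (-1 : ℝ) 0 ⊆ U := by
    rw [uIcc_of_le (by norm_num)]
    exact (Icc_subset_Icc_right (by norm_num)).trans hsub
  have hφ : ContDiffOn ℝ 1 φ U :=
    (contDiffOn_const.sub (contDiffOn_id.pow 2)).mul (hψ.deriv_of_isOpen hU le_rfl)
  have hψc : ContinuousOn ψ (uIcc (-1) 0) := hψ.continuousOn.mono hIcc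
  have hint (n : ℕ) : IntervalIntegrable (fun x => x ^ n * ψ x) volume (-1) 0 :=
    ((continuousOn_pow n).mul hψc).intervalIntegrable
  rw [integral_mul_deriv_flux_eq_integral_deriv_flux_mul_add (p := fun y => 1 - y ^ 2)
      (fun x _ => hasDerivAt_pow l x) (fun x hx => hψ.hasDerivAt_deriv hU two_ne_zero (hIcc hx))
      (fun x _ => hasDerivAt_one_sub_sq_mul_deriv_pow l x)
      (fun x hx => hφ.hasDerivAt_deriv hU one_ne_zero (hIcc hx))
      ((continuousOn_pow l).mul ((hφ.continuousOn_deriv_of_isOpen hU le_rfl).mono hIcc)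
        |>.intervalIntegrable)
      (((continuous_const.mul (continuous_pow _)).sub (continuous_const.mul (continuous_pow _))
        |>.continuousOn.mul hψc).intervalIntegrable)]
  have hsplit : ∫ x in (-1 : ℝ)..0, ((l : ℝ) * (l - 1) * x ^ (l - 2) - l * (l + 1) * x ^ l) * ψ x
      = (l : ℝ) * (l - 1) * (∫ x in (-1 : ℝ)..0, x ^ (l - 2) * ψ x)
        - l * (l + 1) * ∫ x in (-1 : ℝ)..0, x ^ l * ψ x := by
    rw [← intervalIntegral.integral_const_mul, ← intervalIntegral.integral_const_mul,
      ← integral_sub ((hint _).const_mul _) ((hint _).const_mul _)]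
    exact integral_congr fun x _ => by ring
  rw [hsplit]
  simp [zero_pow (by omega : l ≠ 0), zero_pow (by omega : l - 1 ≠ 0)]
  ring
end

section
/- Fix u ∈ ℝ⁴. The dual objective of the minimum-entropy problem for the differentiable mixed-moment basis of order 2 with Maxwell–Boltzmann entropy, namely G : ℝ⁴ → ℝ, G(α) = ∫_{-1}^{1} Real.exp (α 0 + α 1 * x + α 2 * x² * 1_{[0,1]}(x) + α 3 * x² * 1_{[-1,0]}(x)) dx - (u 0 * α 0 + u 1 * α 1 + u 2 * α 2 + u 3 * α 3), is strictly convex on ℝ⁴. -/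
open Set

private lemma b2_eq : ∀ x ∈ Icc (-1:ℝ) 1,
    x ^ 2 * (Icc (0:ℝ) 1).indicator 1 x = (max x 0) ^ 2 := by
  intro x hx
  by_cases h : 0 ≤ x
  · rw [Set.indicator_of_mem (Set.mem_Icc.mpr ⟨h, hx.2⟩), max_eq_left h]; simp
  · rw [Set.indicator_of_notMem (by simp [h] : x ∉ Icc (0:ℝ) 1),
      max_eq_right (le_of_not_ge h)]
    simp

private lemma b3_eq : ∀ x ∈ Icc (-1:ℝ) 1,
    x ^ 2 * (Icc (-1:ℝ) 0).indicator 1 x = (min x 0) ^ 2 := by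
  intro x hx
  by_cases h : x ≤ 0
  · rw [Set.indicator_of_mem (Set.mem_Icc.mpr ⟨hx.1, h⟩), min_eq_left h]; simp
  · rw [Set.indicator_of_notMem (by simp [h] : x ∉ Icc (-1:ℝ) 0),
      min_eq_right (le_of_not_ge h)]
    simp

private lemma contφ (α : Fin 4 → ℝ) :
    ContinuousOn (fun x : ℝ => Real.exp (α 0 + α 1 * x + α 2 * (x ^ 2 * (Icc (0:ℝ) 1).indicator 1 x)
      + α 3 * (x ^ 2 * (Icc (-1:ℝ) 0).indicator 1 x))) (Icc (-1:ℝ) 1) := by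
  apply ContinuousOn.congr (f := fun x : ℝ => Real.exp (α 0 + α 1 * x + α 2 * (max x 0) ^ 2
      + α 3 * (min x 0) ^ 2))
  · fun_prop
  · intro x hx
    simp only [b2_eq x hx, b3_eq x hx]

private lemma contf (α : Fin 4 → ℝ) :
    ContinuousOn (fun x : ℝ => α 0 + α 1 * x + α 2 * (x ^ 2 * (Icc (0:ℝ) 1).indicator 1 x)
      + α 3 * (x ^ 2 * (Icc (-1:ℝ) 0).indicator 1 x)) (Icc (-1:ℝ) 1) := by
  apply ContinuousOn.congr (f := fun x : ℝ => α 0 + α 1 * x + α 2 * (max x 0) ^ 2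
      + α 3 * (min x 0) ^ 2)
  · fun_prop
  · intro x hx
    simp only [b2_eq x hx, b3_eq x hx]

theorem dmm2_dual_objective_strictly_convex (u : Fin 4 → ℝ) :
    StrictConvexOn ℝ (univ : Set (Fin 4 → ℝ))
      (fun α : Fin 4 → ℝ =>
        (∫ x in (-1 : ℝ)..1,
            Real.exp (α 0 + α 1 * x + α 2 * (x ^ 2 * (Icc (0 : ℝ) 1).indicator 1 x)
              + α 3 * (x ^ 2 * (Icc (-1 : ℝ) 0).indicator 1 x)))
          - (u 0 * α 0 + u 1 * α 1 + u 2 * α 2 + u 3 * α 3)) := by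
  set b2 : ℝ → ℝ := fun x => x ^ 2 * (Icc (0:ℝ) 1).indicator 1 x with hb2
  set b3 : ℝ → ℝ := fun x => x ^ 2 * (Icc (-1:ℝ) 0).indicator 1 x with hb3
  constructor
  · exact convex_univ
  intro p _ q _ hpq a b ha hb hab
  set fp : ℝ → ℝ := fun x => p 0 + p 1 * x + p 2 * b2 x + p 3 * b3 x with hfp
  set fq : ℝ → ℝ := fun x => q 0 + q 1 * x + q 2 * b2 x + q 3 * b3 x with hfq
  -- the combination evaluates linearly
  have hcomb : ∀ x : ℝ, (a • p + b • q) 0 + (a • p + b • q) 1 * x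
      + (a • p + b • q) 2 * b2 x + (a • p + b • q) 3 * b3 x
      = a * fp x + b * fq x := by
    intro x
    simp only [Pi.add_apply, Pi.smul_apply, smul_eq_mul, hfp, hfq]
    ring
  -- exists point where fp ≠ fq
  have hx0 : ∃ c ∈ Icc (-1:ℝ) 1, fp c ≠ fq c := by
    by_contra h
    push_neg at h
    have h0 := h 0 (by norm_num)
    have h1 := h 1 (by norm_num)
    have h2 := h (-1) (by norm_num)
    have h3 := h (1/2) (by norm_num)
    have e20 : b2 0 = 0 := by simp [hb2]
    have e21 : b2 1 = 1 := by
      simp only [hb2]; rw [Set.indicator_of_mem (by norm_num)]; norm_num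
    have e22 : b2 (-1) = 0 := by
      simp only [hb2]; rw [Set.indicator_of_notMem (by norm_num)]; ring
    have e23 : b2 (1/2) = 1/4 := by
      simp only [hb2]; rw [Set.indicator_of_mem (by norm_num)]; norm_num
    have e30 : b3 0 = 0 := by simp [hb3]
    have e31 : b3 1 = 0 := by
      simp only [hb3]; rw [Set.indicator_of_notMem (by norm_num)]; ring
    have e32 : b3 (-1) = 1 := by
      simp only [hb3]; rw [Set.indicator_of_mem (by norm_num)]; norm_num
    have e33 : b3 (1/2) = 0 := by
      simp only [hb3]; rw [Set.indicator_of_notMem (by norm_num)]; ring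
    simp only [hfp, hfq, e20, e21, e22, e23, e30, e31, e32, e33] at h0 h1 h2 h3
    apply hpq
    funext i
    fin_cases i <;> [skip; skip; skip; skip] <;> simp <;> linarith
  obtain ⟨c, hc, hcne⟩ := hx0
  -- strict integral inequality
  have key : (∫ x in (-1:ℝ)..1, Real.exp (a * fp x + b * fq x))
      < ∫ x in (-1:ℝ)..1, (a * Real.exp (fp x) + b * Real.exp (fq x)) := by
    apply intervalIntegral.integral_lt_integral_of_continuousOn_of_le_of_exists_lt
      (by norm_num)
    · exact Real.continuous_exp.comp_continuousOn
        ((continuousOn_const.mul (contf p)).add (continuousOn_const.mul (contf q)))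
    · exact (continuousOn_const.mul (contφ p)).add (continuousOn_const.mul (contφ q))
    · intro x _
      have := (convexOn_exp.2 (mem_univ (fp x)) (mem_univ (fq x)) ha.le hb.le hab)
      simpa [smul_eq_mul] using this
    · refine ⟨c, hc, ?_⟩
      have := strictConvexOn_exp.2 (mem_univ (fp c)) (mem_univ (fq c)) hcne ha hb hab
      simpa [smul_eq_mul] using this
  have hsplit : (∫ x in (-1:ℝ)..1, (a * Real.exp (fp x) + b * Real.exp (fq x)))
      = a * (∫ x in (-1:ℝ)..1, Real.exp (fp x)) + b * ∫ x in (-1:ℝ)..1, Real.exp (fq x) := by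
    rw [intervalIntegral.integral_add
        (((contφ p).intervalIntegrable_of_Icc (by norm_num)).const_mul a)
        (((contφ q).intervalIntegrable_of_Icc (by norm_num)).const_mul b),
      intervalIntegral.integral_const_mul, intervalIntegral.integral_const_mul]
  have heq : (fun x : ℝ => Real.exp ((a • p + b • q) 0 + (a • p + b • q) 1 * x
      + (a • p + b • q) 2 * b2 x + (a • p + b • q) 3 * b3 x))
      = fun x : ℝ => Real.exp (a * fp x + b * fq x) := funext fun x => by rw [hcomb x]
  simp only [smul_eq_mul]
  show (∫ x in (-1:ℝ)..1, Real.exp ((a • p + b • q) 0 + (a • p + b • q) 1 * x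
      + (a • p + b • q) 2 * b2 x + (a • p + b • q) 3 * b3 x))
      - (u 0 * (a • p + b • q) 0 + u 1 * (a • p + b • q) 1 + u 2 * (a • p + b • q) 2
        + u 3 * (a • p + b • q) 3)
      < a * ((∫ x in (-1:ℝ)..1, Real.exp (fp x))
          - (u 0 * p 0 + u 1 * p 1 + u 2 * p 2 + u 3 * p 3))
        + b * ((∫ x in (-1:ℝ)..1, Real.exp (fq x))
          - (u 0 * q 0 + u 1 * q 1 + u 2 * q 2 + u 3 * q 3))
  rw [heq]
  simp only [Pi.add_apply, Pi.smul_apply, smul_eq_mul]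
  have hL : u 0 * (a * p 0 + b * q 0) + u 1 * (a * p 1 + b * q 1) + u 2 * (a * p 2 + b * q 2)
      + u 3 * (a * p 3 + b * q 3)
      = a * (u 0 * p 0 + u 1 * p 1 + u 2 * p 2 + u 3 * p 3)
        + b * (u 0 * q 0 + u 1 * q 1 + u 2 * q 2 + u 3 * q 3) := by ring
  rw [hsplit] at key
  linarith
end

section
/- Fix u ∈ ℝ⁴ and let G : ℝ⁴ → ℝ, G(α) = ∫_{-1}^{1} Real.exp (α 0 + α 1 * x + α 2 * x² * 1_{[0,1]}(x) + α 3 * x² * 1_{[-1,0]}(x)) dx - (u 0 * α 0 + u 1 * α 1 + u 2 * α 2 + u 3 * α 3). If α* ∈ ℝ⁴ is a local minimizer of G, then the entropy ansatz ψ(x) = Real.exp (α* 0 + α* 1 * x + α* 2 * x² * 1_{[0,1]}(x) + α* 3 * x² * 1_{[-1,0]}(x)) satisfies the moment constraints: ∫_{-1}^{1} ψ(x) dx = u 0, ∫_{-1}^{1} x * ψ(x) dx = u 1, ∫_{0}^{1} x² * ψ(x) dx = u 2, and ∫_{-1}^{0} x² * ψ(x) dx = u 3. -/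
/-!
Restricting the dual functional to the coordinate line `t ↦ α + t • eᵢ` gives
`t ↦ ∫ exp (f + t bᵢ) - (c + uᵢ t)`. Since every basis function is bounded on `[-1, 1]`, the
`t`-derivative of the integrand is dominated by a multiple of `exp f`, so one may differentiate
under the integral; at a local minimizer the derivative `∫ bᵢ ψ - uᵢ` vanishes.
-/

open Set MeasureTheory Real

lemma hasDerivAt_integral_exp_add_mul {X : Type*} [MeasurableSpace X] {μ : Measure X}
    {f b : X → ℝ} {K : ℝ} (hf : Integrable (fun x => exp (f x)) μ)
    (hb : AEStronglyMeasurable b μ) (hbK : ∀ᵐ x ∂μ, |b x| ≤ K) (t₀ : ℝ) :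
    HasDerivAt (fun t => ∫ x, exp (f x + t * b x) ∂μ)
      (∫ x, b x * exp (f x + t₀ * b x) ∂μ) t₀ := by
  have hexp_meas (t : ℝ) : AEStronglyMeasurable (fun x => exp (t * b x)) μ :=
    continuous_exp.comp_aestronglyMeasurable (hb.const_mul t)
  have hexp_le (R : ℝ) : ∀ᵐ x ∂μ, ∀ t, |t| ≤ R → ‖exp (t * b x)‖ ≤ exp (R * K) := by
    filter_upwards [hbK] with x hx t ht
    rw [norm_of_nonneg (exp_pos _).le, exp_le_exp]
    calc t * b x ≤ |t| * |b x| := (le_abs_self _).trans (abs_mul _ _).le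
      _ ≤ R * K := mul_le_mul ht hx (abs_nonneg _) ((abs_nonneg t).trans ht)
  simp_rw [exp_add, ← mul_assoc]
  refine (hasDerivAt_integral_of_dominated_loc_of_deriv_le (Metric.ball_mem_nhds t₀ one_pos)
    (F := fun t x => exp (f x) * exp (t * b x)) (F' := fun t x => b x * exp (f x) * exp (t * b x))
    (bound := fun x => K * exp (f x) * exp ((|t₀| + 1) * K))
    (.of_forall fun t => hf.aestronglyMeasurable.mul (hexp_meas t))
    (hf.mul_bdd (hexp_meas t₀) ((hexp_le |t₀|).mono fun x hx => hx t₀ le_rfl))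
    ((hb.mul hf.aestronglyMeasurable).mul (hexp_meas t₀)) ?_
    ((hf.const_mul K).mul_const _) ?_).2
  · filter_upwards [hbK, hexp_le (|t₀| + 1)] with x hbx hexpx t ht
    rw [norm_mul, norm_mul, Real.norm_eq_abs, norm_of_nonneg (exp_pos _).le]
    refine mul_le_mul (mul_le_mul_of_nonneg_right hbx (exp_pos _).le) (hexpx t ?_) (norm_nonneg _)
      (mul_nonneg ((abs_nonneg _).trans hbx) (exp_pos _).le)
    have := abs_sub_abs_le_abs_sub t t₀
    rw [Metric.mem_ball, Real.dist_eq] at ht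
    linarith
  · refine .of_forall fun x t _ => ?_
    exact (((hasDerivAt_mul_const (b x)).exp).const_mul (exp (f x))).congr_deriv (by ring)

lemma integrable_exp_sum_mul {ι X : Type*} [Fintype ι] [MeasurableSpace X] {μ : Measure X}
    [IsFiniteMeasure μ] {b : ι → X → ℝ} {K : ℝ} (hb : ∀ j, AEStronglyMeasurable (b j) μ)
    (hbK : ∀ j, ∀ᵐ x ∂μ, |b j x| ≤ K) (β : ι → ℝ) :
    Integrable (fun x => exp (∑ j, β j * b j x)) μ := by
  refine .of_bound (continuous_exp.comp_aestronglyMeasurable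
    (Finset.aestronglyMeasurable_fun_sum _ fun j _ => (hb j).const_mul (β j)))
    (exp (∑ j, |β j| * K)) ?_
  filter_upwards [ae_all_iff.2 hbK] with x hx
  rw [norm_of_nonneg (exp_pos _).le, exp_le_exp]
  refine Finset.sum_le_sum fun j _ => ?_
  calc β j * b j x ≤ |β j| * |b j x| := (le_abs_self _).trans (abs_mul _ _).le
    _ ≤ |β j| * K := mul_le_mul_of_nonneg_left (hx j) (abs_nonneg _)

lemma integral_mul_exp_eq_of_isLocalMin {ι X : Type*} [Fintype ι] [DecidableEq ι]
    [MeasurableSpace X] {μ : Measure X} {b : ι → X → ℝ} {u α : ι → ℝ}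
    (hα : Integrable (fun x => exp (∑ j, α j * b j x)) μ)
    (hmin : IsLocalMin (fun β : ι → ℝ => ∫ x, exp (∑ j, β j * b j x) ∂μ - ∑ j, u j * β j) α)
    {i : ι} {K : ℝ} (hb : AEStronglyMeasurable (b i) μ) (hbK : ∀ᵐ x ∂μ, |b i x| ≤ K) :
    ∫ x, b i x * exp (∑ j, α j * b j x) ∂μ = u i := by
  have hline : IsLocalMin (fun t : ℝ =>
      ∫ x, exp (∑ j, α j * b j x + t * b i x) ∂μ - (∑ j, u j * α j + u i * t)) 0 := by
    have hcont : Continuous fun t : ℝ => α + Pi.single i t :=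
      continuous_const.add (continuous_single (A := fun _ => ℝ) i)
    have := IsLocalMin.comp_continuous (b := 0) (by simpa using hmin) hcont.continuousAt
    simpa [Function.comp_def, add_mul, mul_add, Finset.sum_add_distrib, Pi.single_apply]
      using this
  have hderiv := (hasDerivAt_integral_exp_add_mul hα hb hbK 0).sub
    (((hasDerivAt_id (0 : ℝ)).const_mul (u i)).const_add (∑ j, u j * α j))
  simpa [sub_eq_zero] using hline.hasDerivAt_eq_zero hderiv

lemma intervalIntegral_mul_indicator_Icc_mul {a b c d : ℝ} (hab : a ≤ b) (hbc : b ≤ c) (hcd : c ≤ d)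
    (f g : ℝ → ℝ) :
    ∫ x in a..d, f x * (Icc b c).indicator 1 x * g x = ∫ x in b..c, f x * g x := by
  have hset : (Ioc a d ∩ Icc b c : Set ℝ) =ᵐ[volume] Ioc b c := by
    refine (Filter.EventuallyEq.rfl.inter Ioc_ae_eq_Icc.symm).trans ?_
    rw [Ioc_inter_Ioc, max_eq_right hab, min_eq_right hcd]
    rfl
  have hind (x : ℝ) : f x * (Icc b c).indicator 1 x * g x = (Icc b c).indicator (f * g) x := by
    by_cases hx : x ∈ Icc b c <;> simp [hx]
  simp_rw [hind, intervalIntegral.integral_of_le (hab.trans (hbc.trans hcd)),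
    intervalIntegral.integral_of_le hbc]
  rw [setIntegral_indicator measurableSet_Icc, setIntegral_congr_set hset, Pi.mul_def]

lemma abs_sq_mul_indicator_le_one {x : ℝ} (hx : |x| ≤ 1) (s : Set ℝ) :
    |x ^ 2 * s.indicator 1 x| ≤ 1 := by
  by_cases h : x ∈ s
  · simpa [h, abs_le, sq_abs] using (sq_le_one_iff_abs_le_one x).2 hx
  · simp [h]

noncomputable def mixedMomentBasis : Fin 4 → ℝ → ℝ :=
  ![1, id, fun x => x ^ 2 * (Icc 0 1).indicator 1 x, fun x => x ^ 2 * (Icc (-1) 0).indicator 1 x]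

lemma measurable_mixedMomentBasis (j : Fin 4) : Measurable (mixedMomentBasis j) := by
  fin_cases j
  · exact measurable_const
  · exact measurable_id
  · exact (measurable_id.pow_const 2).mul (measurable_const.indicator measurableSet_Icc)
  · exact (measurable_id.pow_const 2).mul (measurable_const.indicator measurableSet_Icc)

lemma abs_mixedMomentBasis_le_one {x : ℝ} (hx : |x| ≤ 1) (j : Fin 4) :
    |mixedMomentBasis j x| ≤ 1 := by
  fin_cases j
  · simp [mixedMomentBasis]
  · exact hx
  · exact abs_sq_mul_indicator_le_one hx _
  · exact abs_sq_mul_indicator_le_one hx _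

lemma sum_mul_mixedMomentBasis (β : Fin 4 → ℝ) (x : ℝ) :
    ∑ j, β j * mixedMomentBasis j x = β 0 + β 1 * x
      + β 2 * (x ^ 2 * (Icc (0 : ℝ) 1).indicator 1 x)
      + β 3 * (x ^ 2 * (Icc (-1 : ℝ) 0).indicator 1 x) := by
  simp [mixedMomentBasis, Fin.sum_univ_four]

theorem dmm2_dual_first_order_conditions (u : Fin 4 → ℝ) (α : Fin 4 → ℝ)
    (hmin : IsLocalMin
      (fun β : Fin 4 → ℝ =>
        (∫ x in (-1 : ℝ)..1,
            Real.exp (β 0 + β 1 * x + β 2 * (x ^ 2 * (Icc (0 : ℝ) 1).indicator 1 x)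
              + β 3 * (x ^ 2 * (Icc (-1 : ℝ) 0).indicator 1 x)))
          - (u 0 * β 0 + u 1 * β 1 + u 2 * β 2 + u 3 * β 3)) α) :
    (∫ x in (-1 : ℝ)..1,
        Real.exp (α 0 + α 1 * x + α 2 * (x ^ 2 * (Icc (0 : ℝ) 1).indicator 1 x)
          + α 3 * (x ^ 2 * (Icc (-1 : ℝ) 0).indicator 1 x))) = u 0 ∧
    (∫ x in (-1 : ℝ)..1,
        x * Real.exp (α 0 + α 1 * x + α 2 * (x ^ 2 * (Icc (0 : ℝ) 1).indicator 1 x)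
          + α 3 * (x ^ 2 * (Icc (-1 : ℝ) 0).indicator 1 x))) = u 1 ∧
    (∫ x in (0 : ℝ)..1,
        x ^ 2 * Real.exp (α 0 + α 1 * x + α 2 * (x ^ 2 * (Icc (0 : ℝ) 1).indicator 1 x)
          + α 3 * (x ^ 2 * (Icc (-1 : ℝ) 0).indicator 1 x))) = u 2 ∧
    (∫ x in (-1 : ℝ)..0,
        x ^ 2 * Real.exp (α 0 + α 1 * x + α 2 * (x ^ 2 * (Icc (0 : ℝ) 1).indicator 1 x)
          + α 3 * (x ^ 2 * (Icc (-1 : ℝ) 0).indicator 1 x))) = u 3 := by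
  have hb_meas (j : Fin 4) :
      AEStronglyMeasurable (mixedMomentBasis j) (volume.restrict (Ioc (-1) 1)) :=
    (measurable_mixedMomentBasis j).aestronglyMeasurable
  have hb_le (j : Fin 4) : ∀ᵐ x ∂volume.restrict (Ioc (-1) 1), |mixedMomentBasis j x| ≤ 1 := by
    filter_upwards [ae_restrict_mem measurableSet_Ioc] with x hx
    exact abs_mixedMomentBasis_le_one (abs_le.2 ⟨hx.1.le, hx.2⟩) j
  have hlin (β : Fin 4 → ℝ) : u 0 * β 0 + u 1 * β 1 + u 2 * β 2 + u 3 * β 3 = ∑ j, u j * β j :=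
    (Fin.sum_univ_four fun j => u j * β j).symm
  have h11 : (-1 : ℝ) ≤ 1 := by norm_num
  simp only [← sum_mul_mixedMomentBasis, hlin, intervalIntegral.integral_of_le h11] at hmin
  have key (i : Fin 4) := integral_mul_exp_eq_of_isLocalMin
    (integrable_exp_sum_mul hb_meas hb_le α) hmin (hb_meas i) (hb_le i)
  simp only [sum_mul_mixedMomentBasis, ← intervalIntegral.integral_of_le h11] at key
  refine ⟨by simpa [mixedMomentBasis] using key 0, by simpa [mixedMomentBasis] using key 1, ?_, ?_⟩
  · rw [← intervalIntegral_mul_indicator_Icc_mul (a := -1) (d := 1) (by norm_num) zero_le_one le_rfl]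
    simpa [mixedMomentBasis] using key 2
  · rw [← intervalIntegral_mul_indicator_Icc_mul (a := -1) (d := 1) le_rfl (by norm_num) zero_le_one]
    simpa [mixedMomentBasis] using key 3
end

section
/- Let η2p, η2m ∈ ℝ with η2p > 0, η2m > 0 and η2p + η2m ≤ 1, and set η1 = Real.sqrt (η2p * (1 - η2m)) - η2m (the upper realizability boundary). Define η1p = η2p * (η1 + η2m * Real.sqrt ((η2p + η2m - η1²) / (η2m * η2p))) / (η2m + η2p) and η1m = η2m * (η1 - η2p * Real.sqrt ((η2p + η2m - η1²) / (η2m * η2p))) / (η2m + η2p). Then η1p ≥ η2p and -η1m ≥ η2m. -/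
/-!
On the upper boundary write `s = √(η2p (1 - η2m))`, so `η1 = s - η2m`. Using `s² = η2p (1 - η2m)`,
the radicand `(η2p + η2m - η1²) / (η2m η2p)` is the perfect square `((η2p + s) / η2p)²`; substituting
its root collapses the two half moments to `η1p = s` and `η1m = -η2m`. Finally `s ≥ η2p` is
`1 - η2m ≥ η2p`.
-/

namespace Real

theorem sqrt_radicand_eq_of_sq_eq_mul_one_sub {a b s : ℝ} (ha : 0 < a) (hb : 0 < b) (hs : 0 ≤ s)
    (hsq : s ^ 2 = a * (1 - b)) :
    √((a + b - (s - b) ^ 2) / (b * a)) = (a + s) / a := by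
  have hsquare : (a + b - (s - b) ^ 2) / (b * a) = ((a + s) / a) ^ 2 := by
    field_simp
    linear_combination -(a + b) * hsq
  rw [hsquare, sqrt_sq (by positivity)]

theorem le_sqrt_mul_one_sub {a b : ℝ} (ha : 0 ≤ a) (hab : a + b ≤ 1) : a ≤ √(a * (1 - b)) :=
  le_sqrt_of_sq_le (by nlinarith)

end Real

theorem dmm2_half_moment_realizability_upper_boundary
    (η2p η2m : ℝ) (h2p : 0 < η2p) (h2m : 0 < η2m) (hsum : η2p + η2m ≤ 1)
    (η1 : ℝ) (hη1 : η1 = Real.sqrt (η2p * (1 - η2m)) - η2m)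
    (η1p η1m : ℝ)
    (hη1p : η1p = η2p * (η1 + η2m * Real.sqrt ((η2p + η2m - η1 ^ 2) / (η2m * η2p))) / (η2m + η2p))
    (hη1m : η1m = η2m * (η1 - η2p * Real.sqrt ((η2p + η2m - η1 ^ 2) / (η2m * η2p))) / (η2m + η2p)) :
    η1p ≥ η2p ∧ -η1m ≥ η2m := by
  set s := Real.sqrt (η2p * (1 - η2m))
  have hsq : s ^ 2 = η2p * (1 - η2m) := Real.sq_sqrt (by nlinarith)
  have hroot := Real.sqrt_radicand_eq_of_sq_eq_mul_one_sub h2p h2m (Real.sqrt_nonneg _) hsq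
  rw [← hη1] at hroot
  have hη1p_eq : η1p = s := by
    rw [hη1p, hroot, hη1]
    field_simp
    ring
  have hη1m_eq : η1m = -η2m := by
    rw [hη1m, hroot, hη1]
    field_simp
    ring
  exact ⟨hη1p_eq ▸ Real.le_sqrt_mul_one_sub h2p.le hsum, by rw [hη1m_eq, neg_neg]⟩
end
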